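/- For every k ≥ 2 and every integer x with L+1 ≤ x ≤ U−3 (where U−L ≥ 4), β_k(x) = pq·β_{k−2}(x) + p·β_{k−1}(x+2) − pq·β_{k−2}(x+1) + q·β_{k−1}(x−1). -/

import Mathlib

open MeasureTheory ProbabilityTheory Filter
open scoped ENNReal Classical

noncomputable section

variable {Ω : Type*} [MeasurableSpace Ω]

/-- The `k`-th step of the ladder chain `L(2,2,p)` built from the driving
sequence `ξ` (indexed from 1): `X₁ = ±1` according to `ξ₁`, and for `k ≥ 2`,
`X_k = -1` if `ξ_k = -1`, `X_k = 2` if `ξ_k = ξ_{k-1} = 1`, and `X_k = 1`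
if `ξ_k = 1, ξ_{k-1} = -1`. -/
def ladderX (ξ : ℕ → Ω → ℤ) (k : ℕ) (ω : Ω) : ℤ :=
  if k = 1 then (if ξ 1 ω = 1 then 1 else -1)
  else if ξ k ω = -1 then -1
  else if ξ (k - 1) ω = 1 then 2 else 1

/-- The ladder chain `S_n = X₁ + ⋯ + X_n` (with `S_0 = 0`). -/
def ladderS (ξ : ℕ → Ω → ℤ) (n : ℕ) (ω : Ω) : ℤ :=
  ∑ k ∈ Finset.Icc 1 n, ladderX ξ k ω

/-- The truncated exit time `τ_k^x`: the least `l ≤ k` with `S_l^x ≤ L` or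
`S_l^x ≥ U`, and `k` if there is no such `l`. -/
def ladderTau (ξ : ℕ → Ω → ℤ) (L U x : ℤ) (k : ℕ) (ω : Ω) : ℕ :=
  if ∃ l ≤ k, (x + ladderS ξ l ω ≤ L ∨ U ≤ x + ladderS ξ l ω)
  then sInf {l | l ≤ k ∧ (x + ladderS ξ l ω ≤ L ∨ U ≤ x + ladderS ξ l ω)}
  else k

/-- The event `A_k^x`: the walk started at `x` exits through the lower
barrier `L` within the first `k` steps. -/
def ladderA (ξ : ℕ → Ω → ℤ) (L U x : ℤ) (k : ℕ) : Set Ω :=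
  ⋃ l ∈ Finset.range (k + 1),
    {ω | ladderTau ξ L U x k ω = l ∧ x + ladderS ξ l ω ≤ L}

/-- The event `B_k^x`: the walk started at `x` exits through the upper
barrier `U` within the first `k` steps. -/
def ladderB (ξ : ℕ → Ω → ℤ) (L U x : ℤ) (k : ℕ) : Set Ω :=
  ⋃ l ∈ Finset.range (k + 1),
    {ω | ladderTau ξ L U x k ω = l ∧ U ≤ x + ladderS ξ l ω}

/-!
The pair `(S_n, ξ_n)` is a Markov chain, so `β_k(x)` can be expanded over the first steps.
A step `-1` restarts the walk from `x - 1`, and the steps `+1, -1` restart it from `x` two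
steps later. After `+1, +1` the walk stands at `x + 3` with last step `+1`, exactly where a walk
started at `x + 2` stands after a first step `+1`; eliminating the probability of this
conditioned event between the expansions of `β_k(x)` and `β_{k-1}(x + 2)` gives the recursion.
The restarts are made rigorous by writing `β_k(x)` as a weighted count of sign patterns of
length `k`, on which they become identities between sets of patterns.
-/

open Set

def ExitsUpWithin (a : ℕ → ℤ) (L U : ℤ) (k : ℕ) : Prop :=
  ∃ l ≤ k, U ≤ a l ∧ ∀ j < l, a j ∈ Ioo L U

section ExitsUpWithin

variable {a b : ℕ → ℤ} {L U : ℤ} {k : ℕ}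

lemma ExitsUpWithin.congr (h : ∀ j ≤ k, a j = b j) (ha : ExitsUpWithin a L U k) :
    ExitsUpWithin b L U k := by
  obtain ⟨l, hl, hU, hin⟩ := ha
  refine ⟨l, hl, h l hl ▸ hU, fun j hj => ?_⟩
  rw [← h j (by omega)]
  exact hin j hj

lemma exitsUpWithin_congr (h : ∀ j ≤ k, a j = b j) :
    ExitsUpWithin a L U k ↔ ExitsUpWithin b L U k :=
  ⟨.congr h, .congr fun j hj => (h j hj).symm⟩

lemma exitsUpWithin_succ_iff (h0 : a 0 ∈ Ioo L U) :
    ExitsUpWithin a L U (k + 1) ↔ ExitsUpWithin (fun j => a (j + 1)) L U k := by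
  constructor
  · rintro ⟨_ | l, hl, hU, hin⟩
    · exact absurd hU (not_le.mpr h0.2)
    · exact ⟨l, by omega, hU, fun j hj => hin (j + 1) (by omega)⟩
  · rintro ⟨l, hl, hU, hin⟩
    refine ⟨l + 1, by omega, hU, fun j hj => ?_⟩
    rcases j with _ | j
    · exact h0
    · exact hin j (by omega)

end ExitsUpWithin

section Paths

variable {Ω Ω' : Type*} {ξ : ℕ → Ω → ℤ} {ξ' : ℕ → Ω' → ℤ} {ω : Ω} {ω' : Ω'} {L U x : ℤ}
  {k n : ℕ}

lemma mem_ladderB_iff_exitsUpWithin :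
    ω ∈ ladderB ξ L U x k ↔ ExitsUpWithin (fun l => x + ladderS ξ l ω) L U k := by
  simp only [ladderB, mem_iUnion, Finset.mem_range, mem_ofPred_eq, exists_prop]
  constructor
  · rintro ⟨l, hl, hτ, hU⟩
    rw [ladderTau, if_pos ⟨l, by omega, Or.inr hU⟩] at hτ
    refine ⟨l, by omega, hU, fun j hj => ?_⟩
    have hj : j ∉ {l | l ≤ k ∧ (x + ladderS ξ l ω ≤ L ∨ U ≤ x + ladderS ξ l ω)} :=
      notMem_of_lt_csInf' (hτ ▸ hj)
    simp only [mem_ofPred_eq, not_and, not_or, not_le] at hj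
    exact ⟨(hj (by omega)).1, (hj (by omega)).2⟩
  · rintro ⟨l, hl, hU, hin⟩
    refine ⟨l, by omega, ?_, hU⟩
    rw [ladderTau, if_pos ⟨l, hl, Or.inr hU⟩]
    refine IsLeast.csInf_eq ⟨⟨hl, Or.inr hU⟩, fun j ⟨_, hj⟩ => ?_⟩
    by_contra! hlt
    have := hin j hlt
    simp only [mem_Ioo] at this
    omega

lemma ladderS_zero : ladderS ξ 0 ω = 0 := by
  simp [ladderS]

lemma ladderS_one : ladderS ξ 1 ω = ladderX ξ 1 ω := by
  simp [ladderS]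

lemma ladderS_succ (n : ℕ) : ladderS ξ (n + 1) ω = ladderS ξ n ω + ladderX ξ (n + 1) ω :=
  Finset.sum_Icc_succ_top (by omega) _

lemma ladderX_congr (hn : 1 ≤ n) (h : ∀ i, 1 ≤ i → i ≤ n → ξ i ω = ξ' i ω') :
    ladderX ξ n ω = ladderX ξ' n ω' := by
  rcases eq_or_ne n 1 with rfl | hn1
  · simp [ladderX, h 1 le_rfl le_rfl]
  · simp [ladderX, hn1, h n hn le_rfl, h (n - 1) (by omega) (by omega)]

lemma ladderS_congr (h : ∀ i, 1 ≤ i → i ≤ n → ξ i ω = ξ' i ω') :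
    ladderS ξ n ω = ladderS ξ' n ω' :=
  Finset.sum_congr rfl fun _ hj => ladderX_congr (Finset.mem_Icc.mp hj).1
    fun i hi hij => h i hi (hij.trans (Finset.mem_Icc.mp hj).2)

lemma mem_ladderB_congr (h : ∀ i, 1 ≤ i → i ≤ k → ξ i ω = ξ' i ω') :
    ω ∈ ladderB ξ L U x k ↔ ω' ∈ ladderB ξ' L U x k := by
  rw [mem_ladderB_iff_exitsUpWithin, mem_ladderB_iff_exitsUpWithin]
  exact exitsUpWithin_congr fun _ hj => by
    rw [ladderS_congr fun i hi hij => h i hi (hij.trans hj)]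

lemma ladderX_add {c j : ℕ} (hc : 1 ≤ c) (hj : 2 ≤ j) :
    ladderX ξ (j + c) ω = ladderX (fun n => ξ (n + c)) j ω := by
  simp only [ladderX, show j + c ≠ 1 by omega, show j ≠ 1 by omega, if_false,
    show j + c - 1 = j - 1 + c by omega]

/-- Restarting the chain at time `c`: only the first step after `c` sees `ξ c`. -/
lemma ladderS_add {c j : ℕ} (hc : 1 ≤ c) (hj : 1 ≤ j) :
    ladderS ξ (j + c) ω = ladderS ξ c ω
      + (ladderX ξ (c + 1) ω - ladderX (fun n => ξ (n + c)) 1 ω)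
      + ladderS (fun n => ξ (n + c)) j ω := by
  induction j, hj using Nat.le_induction with
  | base => rw [add_comm 1 c, ladderS_succ, ladderS_one]; ring
  | succ j hj ih =>
    rw [show j + 1 + c = j + c + 1 by omega, ladderS_succ, ih, ladderS_succ j,
      show j + c + 1 = j + 1 + c by omega, ladderX_add hc (by omega)]
    ring

lemma mem_ladderB_succ_iff_of_down (h2 : ξ 2 ω = 1 ∨ ξ 2 ω = -1) (h1 : ξ 1 ω = -1)
    (hx : x ∈ Ioo L U) :
    ω ∈ ladderB ξ L U x (k + 1) ↔ ω ∈ ladderB (fun n => ξ (n + 1)) L U (x - 1) k := by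
  rw [mem_ladderB_iff_exitsUpWithin, mem_ladderB_iff_exitsUpWithin,
    exitsUpWithin_succ_iff (by simpa [ladderS_zero] using hx)]
  refine exitsUpWithin_congr fun j _ => ?_
  rcases Nat.eq_zero_or_pos j with rfl | hj
  · simp [ladderS_one, ladderS_zero, ladderX, h1]
    ring
  · rw [ladderS_add le_rfl hj, ladderS_one]
    rcases h2 with h2 | h2 <;> simp [ladderX, h1, h2] <;> ring

lemma mem_ladderB_add_two_iff_of_up_up (h1 : ξ 1 ω = 1) (h2 : ξ 2 ω = 1) (hxL : L < x)
    (hxU : x + 2 < U) :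
    ω ∈ ladderB ξ L U x (k + 2) ↔ ω ∈ ladderB (fun n => ξ (n + 1)) L U (x + 2) (k + 1) := by
  have hS1 : ladderS ξ 1 ω = 1 := by simp [ladderS_one, ladderX, h1]
  rw [mem_ladderB_iff_exitsUpWithin, mem_ladderB_iff_exitsUpWithin,
    exitsUpWithin_succ_iff (by simp only [ladderS_zero, mem_Ioo]; omega),
    exitsUpWithin_succ_iff (by simp only [hS1, mem_Ioo]; omega),
    exitsUpWithin_succ_iff (by simp only [ladderS_zero, mem_Ioo]; omega)]
  refine exitsUpWithin_congr fun j _ => ?_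
  rw [ladderS_add le_rfl (by omega : 1 ≤ j + 1), hS1]
  simp [ladderX, h1, h2]
  ring

lemma mem_ladderB_add_two_iff_of_up_down (h3 : ξ 3 ω = 1 ∨ ξ 3 ω = -1) (h1 : ξ 1 ω = 1)
    (h2 : ξ 2 ω = -1) (hxL : L < x) (hxU : x + 1 < U) :
    ω ∈ ladderB ξ L U x (k + 2) ↔ ω ∈ ladderB (fun n => ξ (n + 2)) L U x k := by
  have hS1 : ladderS ξ 1 ω = 1 := by simp [ladderS_one, ladderX, h1]
  have hS2 : ladderS ξ 2 ω = 0 := by simp [ladderS_succ 1, hS1, ladderX, h2]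
  rw [mem_ladderB_iff_exitsUpWithin, mem_ladderB_iff_exitsUpWithin,
    exitsUpWithin_succ_iff (by simp only [ladderS_zero, mem_Ioo]; omega),
    exitsUpWithin_succ_iff (by simp only [hS1, mem_Ioo]; omega)]
  refine exitsUpWithin_congr fun j _ => ?_
  rcases Nat.eq_zero_or_pos j with rfl | hj
  · simp [hS2, ladderS_zero]
  · rw [show j + 1 + 1 = j + 2 from rfl, ladderS_add (by omega) hj, hS2]
    rcases h3 with h3 | h3 <;> simp [ladderX, h2, h3]

end Paths

def boolSign (b : Bool) : ℤ := if b then 1 else -1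

/-- The coordinate process on sign patterns of length `k`; its values at `n = 0` and `n > k`
are junk. -/
def patternSeq (k : ℕ) : ℕ → (Fin k → Bool) → ℤ
  | 0, _ => 1
  | n + 1, ε => if h : n < k then boolSign (ε ⟨n, h⟩) else 1

section Patterns

variable {k n : ℕ} {b : Bool} {ε : Fin k → Bool} {L U x : ℤ}

lemma patternSeq_eq_one_or (k n : ℕ) (ε : Fin k → Bool) :
    patternSeq k n ε = 1 ∨ patternSeq k n ε = -1 := by
  rcases n with _ | n
  · exact Or.inl rfl
  · simp only [patternSeq, boolSign]
    split_ifs <;> simp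

lemma patternSeq_one_cons : patternSeq (k + 1) 1 (Fin.cons b ε) = boolSign b := by
  simp [patternSeq]

lemma patternSeq_succ_cons (hn : n ≠ 0) :
    patternSeq (k + 1) (n + 1) (Fin.cons b ε) = patternSeq k n ε := by
  obtain ⟨n, rfl⟩ := Nat.exists_eq_succ_of_ne_zero hn
  by_cases h : n < k
  · simp only [patternSeq, dif_pos h, dif_pos (show n + 1 < k + 1 by omega)]
    exact congrArg boolSign (Fin.cons_succ (α := fun _ => Bool) b ε ⟨n, h⟩)
  · simp [patternSeq, h]

lemma cons_false_mem_ladderB_iff (hx : x ∈ Ioo L U) :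
    (Fin.cons false ε : Fin (k + 1) → Bool) ∈ ladderB (patternSeq (k + 1)) L U x (k + 1)
      ↔ ε ∈ ladderB (patternSeq k) L U (x - 1) k := by
  rw [mem_ladderB_succ_iff_of_down (patternSeq_eq_one_or ..) patternSeq_one_cons hx]
  exact mem_ladderB_congr fun _ hi _ => patternSeq_succ_cons (by omega)

lemma cons_true_cons_true_mem_ladderB_iff {ε : Fin k → Bool} (hxL : L < x) (hxU : x + 2 < U) :
    (Fin.cons true (Fin.cons true ε) : Fin (k + 2) → Bool)
        ∈ ladderB (patternSeq (k + 2)) L U x (k + 2)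
      ↔ (Fin.cons true ε : Fin (k + 1) → Bool)
          ∈ ladderB (patternSeq (k + 1)) L U (x + 2) (k + 1) := by
  rw [mem_ladderB_add_two_iff_of_up_up patternSeq_one_cons
    ((patternSeq_succ_cons one_ne_zero).trans patternSeq_one_cons) hxL hxU]
  exact mem_ladderB_congr fun _ hi _ => patternSeq_succ_cons (by omega)

lemma cons_true_cons_false_mem_ladderB_iff {ε : Fin k → Bool} (hxL : L < x) (hxU : x + 1 < U) :
    (Fin.cons true (Fin.cons false ε) : Fin (k + 2) → Bool)
        ∈ ladderB (patternSeq (k + 2)) L U x (k + 2)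
      ↔ ε ∈ ladderB (patternSeq k) L U x k := by
  rw [mem_ladderB_add_two_iff_of_up_down (patternSeq_eq_one_or ..) patternSeq_one_cons
    ((patternSeq_succ_cons one_ne_zero).trans patternSeq_one_cons) hxL hxU]
  refine mem_ladderB_congr fun i hi _ => ?_
  rw [patternSeq_succ_cons (by omega), patternSeq_succ_cons (by omega)]

end Patterns

def patternWeight (p q : ℝ) {k : ℕ} (ε : Fin k → Bool) : ℝ :=
  ∏ i, if ε i then p else q

lemma patternWeight_cons (p q : ℝ) {k : ℕ} (b : Bool) (ε : Fin k → Bool) :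
    patternWeight p q (Fin.cons b ε : Fin (k + 1) → Bool)
      = (if b then p else q) * patternWeight p q ε := by
  simp [patternWeight, Fin.prod_univ_succ]

lemma Fintype.sum_bool_tuple_succ {M : Type*} [AddCommMonoid M] {k : ℕ}
    (f : (Fin (k + 1) → Bool) → M) :
    ∑ ε, f ε = ∑ ε, f (Fin.cons true ε) + ∑ ε, f (Fin.cons false ε) := by
  rw [← (Fin.consEquiv fun _ => Bool).sum_comp, Fintype.sum_prod_type, Fintype.sum_bool]
  rfl

/-- `β_k(x)` computed on the space of sign patterns, `p` and `q` weighting the signs `+1`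
and `-1`. -/
def exitUpWeight (p q : ℝ) (L U x : ℤ) (k : ℕ) : ℝ :=
  ∑ ε : Fin k → Bool, if ε ∈ ladderB (patternSeq k) L U x k then patternWeight p q ε else 0

/-- The same quantity for `k + 1` steps, conditioned on the first sign being `+1`. -/
def exitUpWeightOfFirstUp (p q : ℝ) (L U x : ℤ) (k : ℕ) : ℝ :=
  ∑ ε : Fin k → Bool,
    if (Fin.cons true ε : Fin (k + 1) → Bool) ∈ ladderB (patternSeq (k + 1)) L U x (k + 1)
    then patternWeight p q ε else 0

section Weights

variable {p q : ℝ} {L U x : ℤ} {k : ℕ}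

lemma exitUpWeight_succ (hx : x ∈ Ioo L U) :
    exitUpWeight p q L U x (k + 1)
      = p * exitUpWeightOfFirstUp p q L U x k + q * exitUpWeight p q L U (x - 1) k := by
  rw [exitUpWeight, Fintype.sum_bool_tuple_succ, exitUpWeightOfFirstUp, exitUpWeight,
    Finset.mul_sum, Finset.mul_sum]
  simp [patternWeight_cons, mul_ite, cons_false_mem_ladderB_iff hx]

lemma exitUpWeightOfFirstUp_succ (hxL : L < x) (hxU : x + 2 < U) :
    exitUpWeightOfFirstUp p q L U x (k + 1)
      = p * exitUpWeightOfFirstUp p q L U (x + 2) k + q * exitUpWeight p q L U x k := by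
  rw [exitUpWeightOfFirstUp, Fintype.sum_bool_tuple_succ, exitUpWeightOfFirstUp, exitUpWeight,
    Finset.mul_sum, Finset.mul_sum]
  simp [patternWeight_cons, mul_ite, cons_true_cons_true_mem_ladderB_iff hxL hxU,
    cons_true_cons_false_mem_ladderB_iff hxL (by omega : x + 1 < U)]

lemma exitUpWeight_add_two (hxL : L < x) (hxU : x + 3 ≤ U) :
    exitUpWeight p q L U x (k + 2)
      = p * q * exitUpWeight p q L U x k + p * exitUpWeight p q L U (x + 2) (k + 1)
        - p * q * exitUpWeight p q L U (x + 1) k + q * exitUpWeight p q L U (x - 1) (k + 1) := by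
  have hx := exitUpWeight_succ (p := p) (q := q) (k := k + 1)
    (show x ∈ Ioo L U from ⟨hxL, by omega⟩)
  have hx2 := exitUpWeight_succ (p := p) (q := q) (k := k)
    (show x + 2 ∈ Ioo L U from ⟨by omega, by omega⟩)
  have hup := exitUpWeightOfFirstUp_succ (p := p) (q := q) (k := k) hxL
    (show x + 2 < U by omega)
  rw [show x + 2 - 1 = x + 1 by ring] at hx2
  rw [hx, hup]
  linear_combination (-p) * hx2

end Weights

section SignPatterns

variable {Ω : Type*} {ξ : ℕ → Ω → ℤ} {L U x : ℤ} {k : ℕ}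

def ladderPattern (ξ : ℕ → Ω → ℤ) (k : ℕ) (ω : Ω) : Fin k → Bool :=
  fun i => decide (ξ (i + 1) ω = 1)

lemma boolSign_decide_eq {z : ℤ} (hz : z = 1 ∨ z = -1) : boolSign (decide (z = 1)) = z := by
  rcases hz with rfl | rfl <;> simp [boolSign]

lemma decide_eq_iff_eq_boolSign {z : ℤ} (hz : z = 1 ∨ z = -1) {b : Bool} :
    decide (z = 1) = b ↔ z = boolSign b := by
  rcases hz with rfl | rfl <;> cases b <;> simp [boolSign]

lemma ladderB_eq_preimage_ladderPattern (hval : ∀ n ω, ξ n ω = 1 ∨ ξ n ω = -1) :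
    ladderB ξ L U x k
      = ladderPattern ξ k ⁻¹' ↑(Finset.univ.filter (· ∈ ladderB (patternSeq k) L U x k)) := by
  ext ω
  simp only [Finset.coe_filter, Finset.mem_univ, true_and, mem_preimage, mem_ofPred_eq]
  refine mem_ladderB_congr fun n h1 h2 => ?_
  obtain ⟨n, rfl⟩ := Nat.exists_eq_add_one_of_ne_zero (by omega : n ≠ 0)
  simp only [patternSeq, dif_pos (by omega : n < k), ladderPattern]
  exact (boolSign_decide_eq (hval _ _)).symm

lemma ladderPattern_preimage_singleton (hval : ∀ n ω, ξ n ω = 1 ∨ ξ n ω = -1)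
    (ε : Fin k → Bool) :
    ladderPattern ξ k ⁻¹' {ε} = ⋂ i : Fin k, ξ (i + 1) ⁻¹' {boolSign (ε i)} := by
  ext ω
  simp only [mem_preimage, mem_singleton_iff, mem_iInter, funext_iff, ladderPattern]
  exact forall_congr' fun i => decide_eq_iff_eq_boolSign (hval _ _)

end SignPatterns

section Probability

variable {P : Measure Ω} [IsProbabilityMeasure P] {ξ : ℕ → Ω → ℤ} {p : ℝ} {k : ℕ}

lemma measureReal_eq_boolSign (hmeas : ∀ n, Measurable (ξ n))
    (hval : ∀ n ω, ξ n ω = 1 ∨ ξ n ω = -1)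
    (hprob : ∀ n, 1 ≤ n → P {ω | ξ n ω = 1} = ENNReal.ofReal p) (hp : 0 ≤ p) {n : ℕ}
    (hn : 1 ≤ n) (b : Bool) :
    P.real {ω | ξ n ω = boolSign b} = if b then p else 1 - p := by
  have hup : P.real {ω | ξ n ω = 1} = p := by
    rw [measureReal_def, hprob n hn, ENNReal.toReal_ofReal hp]
  cases b
  · have hdown : {ω | ξ n ω = boolSign false} = {ω | ξ n ω = 1}ᶜ := by
      ext ω
      rcases hval n ω with h | h <;> simp [boolSign, h]
    have hm : MeasurableSet {ω | ξ n ω = 1} := hmeas n (measurableSet_singleton 1)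
    rw [hdown, measureReal_compl hm, probReal_univ, hup]
    rfl
  · exact hup

lemma measureReal_ladderPattern_preimage (hmeas : ∀ n, Measurable (ξ n))
    (hindep : iIndepFun ξ P) (hval : ∀ n ω, ξ n ω = 1 ∨ ξ n ω = -1)
    (hprob : ∀ n, 1 ≤ n → P {ω | ξ n ω = 1} = ENNReal.ofReal p) (hp : 0 ≤ p)
    (ε : Fin k → Bool) :
    P.real (ladderPattern ξ k ⁻¹' {ε}) = patternWeight p (1 - p) ε := by
  have hsucc : Function.Injective fun i : Fin k => (i : ℕ) + 1 :=
    fun i j h => Fin.ext (by simpa using h)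
  rw [ladderPattern_preimage_singleton hval, measureReal_def,
    (hindep.precomp hsucc).meas_iInter fun i => ⟨{boolSign (ε i)}, measurableSet_singleton _, rfl⟩,
    ENNReal.toReal_prod, patternWeight]
  exact Finset.prod_congr rfl fun i _ =>
    measureReal_eq_boolSign hmeas hval hprob hp (by omega) (ε i)

theorem measureReal_ladderB (hmeas : ∀ n, Measurable (ξ n)) (hindep : iIndepFun ξ P)
    (hval : ∀ n ω, ξ n ω = 1 ∨ ξ n ω = -1)
    (hprob : ∀ n, 1 ≤ n → P {ω | ξ n ω = 1} = ENNReal.ofReal p) (hp : 0 ≤ p) (L U x : ℤ)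
    (k : ℕ) :
    P.real (ladderB ξ L U x k) = exitUpWeight p (1 - p) L U x k := by
  have hfiber (ε : Fin k → Bool) : MeasurableSet (ladderPattern ξ k ⁻¹' {ε}) := by
    rw [ladderPattern_preimage_singleton hval]
    exact MeasurableSet.iInter fun i => hmeas _ (measurableSet_singleton _)
  rw [ladderB_eq_preimage_ladderPattern hval,
    ← sum_measureReal_preimage_singleton _ fun ε _ => hfiber ε, exitUpWeight, ← Finset.sum_filter]
  exact Finset.sum_congr rfl fun ε _ =>
    measureReal_ladderPattern_preimage hmeas hindep hval hprob hp ε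

end Probability

theorem ladder_betak_rec_interior_general (p q : ℝ) (hp0 : 0 < p) (hq : q = 1 - p)
    (P : Measure Ω) [IsProbabilityMeasure P]
    (ξ : ℕ → Ω → ℤ) (hmeas : ∀ n, Measurable (ξ n))
    (hindep : iIndepFun ξ P)
    (hval : ∀ n ω, ξ n ω = 1 ∨ ξ n ω = -1)
    (hprob : ∀ n, 1 ≤ n → P {ω | ξ n ω = 1} = ENNReal.ofReal p)
    (L U : ℤ) (k : ℕ) (hk : 2 ≤ k)
    (x : ℤ) (hx1 : L + 1 ≤ x) (hx2 : x ≤ U - 3) :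
    (P (ladderB ξ L U x k)).toReal
      = p * q * (P (ladderB ξ L U x (k - 2))).toReal
        + p * (P (ladderB ξ L U (x + 2) (k - 1))).toReal
        - p * q * (P (ladderB ξ L U (x + 1) (k - 2))).toReal
        + q * (P (ladderB ξ L U (x - 1) (k - 1))).toReal := by
  obtain ⟨m, rfl⟩ : ∃ m, k = m + 2 := ⟨k - 2, by omega⟩
  have hβ (y : ℤ) (j : ℕ) : (P (ladderB ξ L U y j)).toReal = exitUpWeight p q L U y j := by
    rw [hq]
    exact measureReal_ladderB hmeas hindep hval hprob hp0.le L U y j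
  simp only [hβ, Nat.add_sub_cancel, show m + 2 - 1 = m + 1 by omega]
  exact exitUpWeight_add_two (by omega) (by omega)

/-- For `k ≥ 2` and `L + 1 ≤ x ≤ U - 3`,
`β_k(x) = pq·β_(k-2)(x) + p·β_(k-1)(x+2) - pq·β_(k-2)(x+1) + q·β_(k-1)(x-1)`. -/
theorem ladder_betak_rec_interior (p q : ℝ) (hp0 : 0 < p) (hp1 : p < 1) (hq : q = 1 - p)
    (P : Measure Ω) [IsProbabilityMeasure P]
    (ξ : ℕ → Ω → ℤ) (hmeas : ∀ n, Measurable (ξ n))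
    (hindep : iIndepFun ξ P)
    (hval : ∀ n ω, ξ n ω = 1 ∨ ξ n ω = -1)
    (hprob : ∀ n, 1 ≤ n → P {ω | ξ n ω = 1} = ENNReal.ofReal p)
    (L U : ℤ) (hLU : U - L ≥ 4) (k : ℕ) (hk : 2 ≤ k)
    (x : ℤ) (hx1 : L + 1 ≤ x) (hx2 : x ≤ U - 3) :
    (P (ladderB ξ L U x k)).toReal
      = p * q * (P (ladderB ξ L U x (k - 2))).toReal
        + p * (P (ladderB ξ L U (x + 2) (k - 1))).toReal
        - p * q * (P (ladderB ξ L U (x + 1) (k - 2))).toReal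
        + q * (P (ladderB ξ L U (x - 1) (k - 1))).toReal :=
  ladder_betak_rec_interior_general p q hp0 hq P ξ hmeas hindep hval hprob L U k hk x hx1 hx2

end
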